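/- Suppose G contains no colliders and μ ∈ P_G satisfies the TV-Lipschitz kernel assumption with constant L. Then the kernels of the midpoint projection μ^M are (2L+1)-Lipschitz with respect to the Wasserstein distance: for every 2 ≤ k ≤ K and all x_pa(k), x̃_pa(k) ∈ M_pa(k), W( μ^M(dx_k | x_pa(k)), μ^M(dx_k | x̃_pa(k)) ) ≤ (2L+1) ‖x_pa(k) − x̃_pa(k)‖. -/

import Mathlib

open MeasureTheory Finset
open scoped ENNReal NNReal

noncomputable section

abbrev I01 : Type := unitInterval

def half : I01 := ⟨1 / 2, by norm_num⟩

/-- Index of the dyadic cell of side length `2^{-η}` containing `t ∈ [0,1]`. -/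
def cIdx (η : ℕ) (t : I01) : ℕ := min ⌊(t : ℝ) * 2 ^ η⌋₊ (2 ^ η - 1)

lemma cIdx_le_real (η : ℕ) (t : I01) : (cIdx η t : ℝ) ≤ 2 ^ η - 1 := by
  have h : cIdx η t ≤ 2 ^ η - 1 := min_le_right _ _
  have h1 : (1 : ℕ) ≤ 2 ^ η := Nat.one_le_two_pow
  calc (cIdx η t : ℝ) ≤ ((2 ^ η - 1 : ℕ) : ℝ) := by exact_mod_cast h
    _ = 2 ^ η - 1 := by rw [Nat.cast_sub h1]; push_cast; ring

/-- Midpoint of the dyadic cell of side length `2^{-η}` containing `t`. -/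
def cMid (η : ℕ) (t : I01) : I01 :=
  ⟨((cIdx η t : ℝ) + 1 / 2) / 2 ^ η, by
    constructor
    · positivity
    · rw [div_le_one (by positivity)]
      have := cIdx_le_real η t
      linarith⟩

/-- Order-1 Wasserstein distance (w.r.t. the given metric, infimum over couplings). -/
def Wass {α : Type*} [MeasurableSpace α] [PseudoMetricSpace α] (μ ν : Measure α) : ℝ :=
  sInf {r | ∃ π : Measure (α × α), π.map Prod.fst = μ ∧ π.map Prod.snd = ν ∧
    r = ∫ p, dist p.1 p.2 ∂π}

/-- Total variation distance, `sup { ∫ f dμ - ∫ f dν : f measurable, |f| ≤ 1/2 }`. -/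
def TVDist {α : Type*} [MeasurableSpace α] (μ ν : Measure α) : ℝ :=
  sSup {r | ∃ f : α → ℝ, Measurable f ∧ (∀ x, |f x| ≤ 1 / 2) ∧
    r = (∫ x, f x ∂μ) - ∫ x, f x ∂ν}

/-- Total variation norm of a signed measure, `sup { ∫ f dν : |f| ≤ 1/2 } = |ν|(univ)/2`. -/
def tvNorm {α : Type*} [MeasurableSpace α] (s : SignedMeasure α) : ℝ :=
  (s.totalVariation Set.univ).toReal / 2

/-- `m` conditioned on `s` (normalized restriction), Dirac at `x₀` if `m s = 0`. -/
def condOn {α : Type*} [MeasurableSpace α] (m : Measure α) (s : Set α) (x₀ : α) : Measure α :=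
  if m s = 0 then Measure.dirac x₀ else (m s)⁻¹ • m.restrict s

/-- Empirical measure of the sample `ω`. -/
def empOf {α : Type*} [MeasurableSpace α] (n : ℕ) (ω : Fin n → α) : Measure α :=
  (n : ℝ≥0∞)⁻¹ • ∑ i : Fin n, Measure.dirac (ω i)

/-- Law of `n` i.i.d. samples from `μ`. -/
def iid {α : Type*} [MeasurableSpace α] (n : ℕ) (μ : Measure α) : Measure (Fin n → α) :=
  Measure.pi fun _ => μ

section Graphical

variable {K : ℕ}

abbrev Coord (d : Fin K → ℕ) (k : Fin K) : Type := Fin (d k) → I01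
abbrev Pt (d : Fin K → ℕ) : Type := ∀ k : Fin K, Coord d k
abbrev PtOn (d : Fin K → ℕ) (I : Finset (Fin K)) : Type := ∀ j : I, Coord d j.1

def projOn (d : Fin K → ℕ) (I : Finset (Fin K)) (x : Pt d) : PtOn d I := fun j => x j.1

def restrOn (d : Fin K → ℕ) {I J : Finset (Fin K)} (h : I ⊆ J) (y : PtOn d J) : PtOn d I :=
  fun j => y ⟨j.1, h j.2⟩

def basePt (d : Fin K → ℕ) : Pt d := fun _ _ => half

/-- The cell of the partition of `X_I` into cubes of side length `2^{-η}` containing `x`. -/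
def cellOn (d : Fin K → ℕ) (η : ℕ) (I : Finset (Fin K)) (x : PtOn d I) : Set (PtOn d I) :=
  {y | ∀ j i, cIdx η (y j i) = cIdx η (x j i)}

/-- The cylinder over the cell of `A_I` containing the coordinates `x_I` of `x`. -/
def cylOf (d : Fin K → ℕ) (η : ℕ) (I : Finset (Fin K)) (x : Pt d) : Set (Pt d) :=
  {y | ∀ j ∈ I, ∀ i, cIdx η (y j i) = cIdx η (x j i)}

def midPtOn (d : Fin K → ℕ) (η : ℕ) (I : Finset (Fin K)) (x : PtOn d I) : PtOn d I :=
  fun j i => cMid η (x j i)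

def midPt (d : Fin K → ℕ) (η : ℕ) (x : Pt d) : Pt d := fun k i => cMid η (x k i)

/-- The DAG (given by its parent map) is topologically sorted. -/
def SortedGraph (pa : Fin K → Finset (Fin K)) : Prop := ∀ k, ∀ j ∈ pa k, j < k

/-- A set of nodes is fully connected (any two of its nodes are joined by an edge). -/
def FullConn (pa : Fin K → Finset (Fin K)) (I : Finset (Fin K)) : Prop :=
  ∀ i ∈ I, ∀ j ∈ I, i < j → i ∈ pa j

/-- The graph has no colliders: every parent set is fully connected. -/
def NoColliders (pa : Fin K → Finset (Fin K)) : Prop := ∀ k, FullConn pa (pa k)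

def below (k : Fin K) : Finset (Fin K) := Finset.univ.filter fun j => j < k
def uptoI (k : Fin K) : Finset (Fin K) := Finset.univ.filter fun j => j ≤ k
def preOf (pa : Fin K → Finset (Fin K)) (k : Fin K) : Finset (Fin K) := uptoI k \ pa k

def dpa (d : Fin K → ℕ) (pa : Fin K → Finset (Fin K)) (k : Fin K) : ℕ := ∑ j ∈ pa k, d j

def dloc (d : Fin K → ℕ) (pa : Fin K → Finset (Fin K)) : ℕ :=
  Finset.univ.sup fun k : Fin K => max 2 (d k) + dpa d pa k

def dmax (d : Fin K → ℕ) : ℕ := Finset.univ.sup fun k : Fin K => max 2 (d k)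

/-- `κ` is a regular conditional distribution of the coordinates in `J` given those in `I`,
under `μ`. -/
def IsCondD (d : Fin K → ℕ) (μ : Measure (Pt d)) (I J : Finset (Fin K))
    (κ : PtOn d I → Measure (PtOn d J)) : Prop :=
  Measurable κ ∧ (∀ y, IsProbabilityMeasure (κ y)) ∧
    ∀ (A : Set (PtOn d I)) (B : Set (PtOn d J)), MeasurableSet A → MeasurableSet B →
      μ {x | projOn d I x ∈ A ∧ projOn d J x ∈ B} = ∫⁻ y in A, κ y B ∂(μ.map (projOn d I))

/-- `μ ∈ P_G`: for each node, some conditional distribution of `x_k` given all earlier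
coordinates factors through the parent coordinates only. -/
def MemPG (d : Fin K → ℕ) (pa : Fin K → Finset (Fin K)) (μ : Measure (Pt d)) : Prop :=
  ∀ k : Fin K, ∃ κ : PtOn d (pa k) → Measure (PtOn d ({k} : Finset (Fin K))),
    IsCondD d μ (below k ∪ pa k) {k}
      fun y => κ (restrOn d (fun _ hj => Finset.mem_union_right _ hj) y)

/-- Wasserstein-Lipschitz kernel assumption with constant `L`. -/
def WLip (d : Fin K → ℕ) (pa : Fin K → Finset (Fin K)) (L : ℝ) (μ : Measure (Pt d)) : Prop :=
  ∀ k : Fin K, 1 ≤ k.1 →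
    ∃ κ : PtOn d (pa k) → Measure (PtOn d ({k} : Finset (Fin K))),
      IsCondD d μ (pa k) {k} κ ∧
        ∀ x x' : PtOn d (pa k), Wass (κ x) (κ x') ≤ L * dist x x'

/-- Total-variation-Lipschitz kernel assumption with constant `L`. -/
def TVLip (d : Fin K → ℕ) (pa : Fin K → Finset (Fin K)) (L : ℝ) (μ : Measure (Pt d)) : Prop :=
  ∀ k : Fin K, 1 ≤ k.1 →
    (∃ κ : PtOn d (pa k) → Measure (PtOn d ({k} : Finset (Fin K))),
      IsCondD d μ (pa k) {k} κ ∧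
        ∀ x x', TVDist (κ x) (κ x') ≤ L * dist x x') ∧
    (∃ κ : PtOn d (pa k) → Measure (PtOn d (preOf pa k)),
      IsCondD d μ (pa k) (preOf pa k) κ ∧
        ∀ x x', TVDist (κ x) (κ x') ≤ L * dist x x') ∧
    (∃ κ : PtOn d ({k} : Finset (Fin K)) → Measure (PtOn d (pa k)),
      IsCondD d μ {k} (pa k) κ ∧
        ∀ x x', TVDist (κ x) (κ x') ≤ L * dist x x')

/-- Iterated construction of the graph product measure `∏_k κ_k(dx_k | x_pa(k))`. -/
def chainM (d : Fin K → ℕ) (pa : Fin K → Finset (Fin K))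
    (κ : ∀ k : Fin K, PtOn d (pa k) → Measure (PtOn d ({k} : Finset (Fin K)))) :
    ℕ → Measure (Pt d)
  | 0 => Measure.dirac (basePt d)
  | n + 1 =>
      if h : n < K then
        (chainM d pa κ n).bind fun x =>
          (κ ⟨n, h⟩ (projOn d (pa ⟨n, h⟩) x)).map fun y =>
            Function.update x ⟨n, h⟩ (y ⟨⟨n, h⟩, Finset.mem_singleton_self _⟩)
      else chainM d pa κ n

def graphProd (d : Fin K → ℕ) (pa : Fin K → Finset (Fin K))
    (κ : ∀ k : Fin K, PtOn d (pa k) → Measure (PtOn d ({k} : Finset (Fin K)))) :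
    Measure (Pt d) := chainM d pa κ K

/-- Completion of `x ∈ X_pa(k)` to a point of `X` (cell midpoints on `pa k`, `1/2` elsewhere). -/
def extendPt (d : Fin K → ℕ) (pa : Fin K → Finset (Fin K)) (η : ℕ) (k : Fin K)
    (x : PtOn d (pa k)) : Pt d :=
  fun j => if h : j ∈ pa k then (fun i => cMid η (x ⟨j, h⟩ i)) else fun _ => half

/-- The measure `ν^A` built from a choice `κ` of conditional kernels of `ν`. -/
def opA (d : Fin K → ℕ) (pa : Fin K → Finset (Fin K)) (η : ℕ) (ν : Measure (Pt d))
    (κ : ∀ k : Fin K, PtOn d (pa k) → Measure (PtOn d ({k} : Finset (Fin K)))) :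
    Measure (Pt d) :=
  graphProd d pa fun k x =>
    (condOn (ν.map (projOn d (pa k))) (cellOn d η (pa k) x) (midPtOn d η (pa k) x)).bind (κ k)

/-- The canonical (kernel-choice free) version of `ν^A`. -/
def opACanon (d : Fin K → ℕ) (pa : Fin K → Finset (Fin K)) (η : ℕ) (ν : Measure (Pt d)) :
    Measure (Pt d) :=
  graphProd d pa fun k x =>
    (condOn ν (projOn d (pa k) ⁻¹' cellOn d η (pa k) x) (extendPt d pa η k x)).map
      (projOn d ({k} : Finset (Fin K)))

/-- The kernel `μ^{bA}(dx_k | x_pa(k)) = Σ_{c_k} μ(c_k | c_pa(k)(x_pa(k))) μ_{k|c_k}(dx_k)`. -/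
def kerBA (d : Fin K → ℕ) (pa : Fin K → Finset (Fin K)) (η : ℕ) (μ : Measure (Pt d))
    (k : Fin K) (x : PtOn d (pa k)) : Measure (PtOn d ({k} : Finset (Fin K))) :=
  (((condOn μ (projOn d (pa k) ⁻¹' cellOn d η (pa k) x) (extendPt d pa η k x)).map
      (projOn d ({k} : Finset (Fin K)))).bind) fun z =>
    condOn (μ.map (projOn d ({k} : Finset (Fin K)))) (cellOn d η {k} z) (midPtOn d η {k} z)

/-- The measure `μ^{bA}`. -/
def opBA (d : Fin K → ℕ) (pa : Fin K → Finset (Fin K)) (η : ℕ) (μ : Measure (Pt d)) :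
    Measure (Pt d) := graphProd d pa (kerBA d pa η μ)

/-- The midpoint projection `μ^M` of `μ^{bA}`. -/
def opM (d : Fin K → ℕ) (pa : Fin K → Finset (Fin K)) (η : ℕ) (μ : Measure (Pt d)) :
    Measure (Pt d) := (opBA d pa η μ).map (midPt d η)

/-- The kernel of `μ^M` built from the conditional kernel `κ` of `μ`:
cell-average of `κ`, pushed to cell midpoints. -/
def kerM (d : Fin K → ℕ) (pa : Fin K → Finset (Fin K)) (η : ℕ) (μ : Measure (Pt d)) (k : Fin K)
    (κ : PtOn d (pa k) → Measure (PtOn d ({k} : Finset (Fin K)))) (y : PtOn d (pa k)) :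
    Measure (PtOn d ({k} : Finset (Fin K))) :=
  ((condOn (μ.map (projOn d (pa k))) (cellOn d η (pa k) y) (midPtOn d η (pa k) y)).bind κ).map
    (midPtOn d η ({k} : Finset (Fin K)))

/-- `m(dx_k | c_pa(k)(x))`: `m` conditioned on the parent cell of `x`, projected to node `k`. -/
def cellCondProj (d : Fin K → ℕ) (pa : Fin K → Finset (Fin K)) (η : ℕ) (m : Measure (Pt d))
    (k : Fin K) (x : Pt d) : Measure (PtOn d ({k} : Finset (Fin K))) :=
  (condOn m (projOn d (pa k) ⁻¹' cellOn d η (pa k) (projOn d (pa k) x)) (midPt d η x)).map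
    (projOn d ({k} : Finset (Fin K)))

/-- Minimax risk `V_Q(n)` for estimating a measure in `Q` from `n` i.i.d. samples,
in Wasserstein distance. -/
def minimax (d : Fin K → ℕ) (Q : Set (Measure (Pt d))) (n : ℕ) : ℝ :=
  ⨅ E : {E : (Fin n → Pt d) → Measure (Pt d) // Measurable E},
    ⨆ μ : Q, ∫ ω, Wass (μ : Measure (Pt d)) (E.1 ω) ∂(iid n (μ : Measure (Pt d)))

/-- Number of directed paths of length `ℓ` starting at `k` (following edge directions). -/
def pathCount (pa : Fin K → Finset (Fin K)) : ℕ → Fin K → ℕ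
  | 0, _ => 1
  | ℓ + 1, k => ∑ j ∈ Finset.univ.filter (fun j => k ∈ pa j), pathCount pa ℓ j

/-- The constant `M_{L,k} = 1 + Σ_{ℓ=1}^K a_{k,ℓ} L^ℓ`. -/
def MConst (pa : Fin K → Finset (Fin K)) (L : ℝ) (k : Fin K) : ℝ :=
  1 + ∑ ℓ ∈ Finset.Icc 1 K, (pathCount pa ℓ k : ℝ) * L ^ ℓ

/-- Lebesgue measure on `[0,1]^d = Π_k Π_i [0,1]`. -/
def lebPt (d : Fin K → ℕ) : Measure (Pt d) :=
  Measure.pi fun k => Measure.pi fun _ : Fin (d k) => (volume : Measure ℝ).comap Subtype.val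

/-- Product of the (one-node) marginals of `ν`. -/
def prodMarg (d : Fin K → ℕ) (ν : Measure (Pt d)) : Measure (Pt d) :=
  Measure.pi fun k => ν.map fun x => x k

/-- Cell average `f^ν` of `f` w.r.t. the product of the marginals of `ν`. -/
def fAvg (d : Fin K → ℕ) (η : ℕ) (ν : Measure (Pt d)) (f : Pt d → ℝ) (x : Pt d) : ℝ :=
  if prodMarg d ν (cylOf d η Finset.univ x) = 0 then 0
  else (∫ y in cylOf d η Finset.univ x, f y ∂prodMarg d ν) /
    (prodMarg d ν (cylOf d η Finset.univ x)).toReal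

/-- Combining points over two disjoint blocks of nodes. -/
def glue (d : Fin K → ℕ) {J J' : Finset (Fin K)} (p : PtOn d J × PtOn d J') :
    PtOn d (J ∪ J') := fun j =>
  if h : j.1 ∈ J then p.1 ⟨j.1, h⟩
  else p.2 ⟨j.1, by
    rcases Finset.mem_union.mp j.2 with h' | h'
    · exact absurd h' h
    · exact h'⟩

/-- `X_J` and `X_J'` are conditionally independent given `X_I` under `μ`. -/
def CondIndepOn (d : Fin K → ℕ) (μ : Measure (Pt d)) (I J J' : Finset (Fin K)) : Prop :=
  ∃ (κJ : PtOn d I → Measure (PtOn d J)) (κJ' : PtOn d I → Measure (PtOn d J')),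
    IsCondD d μ I J κJ ∧ IsCondD d μ I J' κJ' ∧
      IsCondD d μ I (J ∪ J') fun y => ((κJ y).prod (κJ' y)).map (glue d)

/-- The set `P_CI` of probability measures all of whose disjoint coordinate blocks are
conditionally independent given any disjoint nonempty block. -/
def PCI (d : Fin K → ℕ) : Set (Measure (Pt d)) :=
  {μ | IsProbabilityMeasure μ ∧
    ∀ I J J' : Finset (Fin K), I.Nonempty → Disjoint I J → Disjoint I J' → Disjoint J J' →
      CondIndepOn d μ I J J'}

end Graphical

section TwoBlocks

abbrev Vec (m : ℕ) : Type := Fin m → I01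

def cellV (η : ℕ) {m : ℕ} (x : Vec m) : Set (Vec m) :=
  {y | ∀ i, cIdx η (y i) = cIdx η (x i)}

def midV (η : ℕ) {m : ℕ} (x : Vec m) : Vec m := fun i => cMid η (x i)

/-- `ν^A` for two blocks and the graph `1 → 2`. -/
def opA2 {m₁ m₂ : ℕ} (η : ℕ) (ν : Measure (Vec m₁ × Vec m₂)) : Measure (Vec m₁ × Vec m₂) :=
  ν.bind fun p =>
    ((condOn ν (Prod.fst ⁻¹' cellV η p.1) (midV η p.1, midV η p.2)).map Prod.snd).map
      fun y => (p.1, y)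

/-- `μ^{bA}` for two blocks:  `Σ_{c₁,c₂} μ(c₁ × c₂) (μ_{1|c₁} ⊗ μ_{2|c₂})`. -/
def opBA2 {m₁ m₂ : ℕ} (η : ℕ) (μ : Measure (Vec m₁ × Vec m₂)) : Measure (Vec m₁ × Vec m₂) :=
  μ.bind fun p =>
    (condOn (μ.map Prod.fst) (cellV η p.1) (midV η p.1)).prod
      (condOn (μ.map Prod.snd) (cellV η p.2) (midV η p.2))

/-- The kernel `μ^{bA}(dx₂ | x₁) = Σ_{c₂} μ(c₂ | c₁(x₁)) μ_{2|c₂}(dx₂)`. -/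
def kerBA2 {m₁ m₂ : ℕ} (η : ℕ) (μ : Measure (Vec m₁ × Vec m₂)) (x₁ : Vec m₁) :
    Measure (Vec m₂) :=
  (((condOn μ (Prod.fst ⁻¹' cellV η x₁) (midV η x₁, fun _ => half)).map Prod.snd).bind) fun z =>
    condOn (μ.map Prod.snd) (cellV η z) (midV η z)

/-- `κ` is a conditional distribution of the second block given the first, under `μ`. -/
def IsCD2 {m₁ m₂ : ℕ} (μ : Measure (Vec m₁ × Vec m₂)) (κ : Vec m₁ → Measure (Vec m₂)) : Prop :=
  Measurable κ ∧ (∀ x, IsProbabilityMeasure (κ x)) ∧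
    ∀ (A : Set (Vec m₁)) (B : Set (Vec m₂)), MeasurableSet A → MeasurableSet B →
      μ (A ×ˢ B) = ∫⁻ x in A, κ x B ∂(μ.map Prod.fst)

end TwoBlocks

end

/-!
Two distinct cell midpoints are at least one cell width `2^{-η}` apart, so any point of the first
cell is within `2‖y - y'‖` of any point of the second. The kernel of `μ^M` at `y` is the
TV-Lipschitz kernel `κ` averaged over the cell of `y` and pushed to midpoints; averaging and
pushing forward do not increase total variation, so the kernels at `y` and `y'` are
`2L‖y - y'‖`-close in total variation. On a space of diameter one, a maximal coupling (built from
the Hahn decomposition) bounds the Wasserstein distance by the total variation distance.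
-/

open ProbabilityTheory

section TotalVariation

variable {α β : Type*} [MeasurableSpace α] [MeasurableSpace β]

lemma tvDist_nonneg (P Q : Measure α) : 0 ≤ TVDist P Q :=
  Real.sSup_nonneg' ⟨0, ⟨0, measurable_const, by simp, by simp⟩, le_rfl⟩

lemma tvDist_le {P Q : Measure α} {B : ℝ}
    (h : ∀ f : α → ℝ, Measurable f → (∀ x, |f x| ≤ 1 / 2) → (∫ x, f x ∂P) - ∫ x, f x ∂Q ≤ B) :
    TVDist P Q ≤ B :=
  csSup_le ⟨0, 0, measurable_const, by simp, by simp⟩ fun _ ⟨f, hf, hfb, hr⟩ => hr ▸ h f hf hfb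

lemma tvDist_self (P : Measure α) : TVDist P P = 0 :=
  le_antisymm (tvDist_le fun _ _ _ => (sub_self _).le) (tvDist_nonneg P P)

lemma abs_integral_le_half_of_abs_le_half (m : Measure α) [IsProbabilityMeasure m] {f : α → ℝ}
    (hfb : ∀ x, |f x| ≤ 1 / 2) : |∫ x, f x ∂m| ≤ 1 / 2 := by
  simpa using norm_integral_le_of_norm_le_const (μ := m)
    (.of_forall fun x => (Real.norm_eq_abs (f x)).trans_le (hfb x))

lemma sub_le_tvDist (P Q : Measure α) [IsProbabilityMeasure P] [IsProbabilityMeasure Q]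
    {f : α → ℝ} (hf : Measurable f) (hfb : ∀ x, |f x| ≤ 1 / 2) :
    (∫ x, f x ∂P) - ∫ x, f x ∂Q ≤ TVDist P Q := by
  refine le_csSup ⟨1, ?_⟩ ⟨f, hf, hfb, rfl⟩
  rintro _ ⟨g, -, hgb, rfl⟩
  have hP := abs_le.mp (abs_integral_le_half_of_abs_le_half P hgb)
  have hQ := abs_le.mp (abs_integral_le_half_of_abs_le_half Q hgb)
  linarith [hP.2, hQ.1]

lemma measureReal_sub_le_tvDist (P Q : Measure α) [IsProbabilityMeasure P]
    [IsProbabilityMeasure Q] {s : Set α} (hs : MeasurableSet s) :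
    P.real s - Q.real s ≤ TVDist P Q := by
  have hφ : ∀ m : Measure α, [IsProbabilityMeasure m] →
      ∫ x, (s.indicator 1 x - 1 / 2 : ℝ) ∂m = m.real s - 1 / 2 := fun m _ => by
    rw [integral_sub ((integrable_const 1).indicator hs) (integrable_const _),
      integral_indicator_one hs, integral_const, probReal_univ, one_smul]
  have hφb : ∀ x, |(s.indicator 1 x - 1 / 2 : ℝ)| ≤ 1 / 2 := fun x => by
    by_cases hx : x ∈ s <;> norm_num [hx, abs_le]
  have := sub_le_tvDist P Q ((measurable_one.indicator hs).sub_const _) hφb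
  rwa [hφ P, hφ Q, sub_sub_sub_cancel_right] at this

lemma tvDist_map_le (P Q : Measure α) [IsProbabilityMeasure P] [IsProbabilityMeasure Q]
    {g : α → β} (hg : Measurable g) : TVDist (P.map g) (Q.map g) ≤ TVDist P Q :=
  tvDist_le fun f hf hfb => by
    rw [integral_map hg.aemeasurable hf.aestronglyMeasurable,
      integral_map hg.aemeasurable hf.aestronglyMeasurable]
    exact sub_le_tvDist P Q (hf.comp hg) fun x => hfb (g x)

lemma integral_sub_integral_le_of_ae_ae {ν ν' : Measure α} [IsProbabilityMeasure ν]
    [IsProbabilityMeasure ν'] {F : α → ℝ} (hF : Integrable F ν) (hF' : Integrable F ν') {B : ℝ}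
    (h : ∀ᵐ z ∂ν, ∀ᵐ z' ∂ν', F z - F z' ≤ B) :
    (∫ z, F z ∂ν) - ∫ z', F z' ∂ν' ≤ B := by
  have hpoint : ∀ᵐ z ∂ν, F z ≤ (∫ z', F z' ∂ν') + B := by
    filter_upwards [h] with z hz
    have := integral_mono_ae (integrable_const (F z - B)) hF' (by
      filter_upwards [hz] with z' hz'
      linarith)
    rw [integral_const, probReal_univ, one_smul] at this
    linarith
  have := integral_mono_ae hF (integrable_const _) hpoint
  rw [integral_const, probReal_univ, one_smul] at this
  linarith

lemma integral_comp_measure (κ : Kernel α β) (ν : Measure α) {f : β → ℝ}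
    (hf : Integrable f (κ ∘ₘ ν)) :
    ∫ y, f y ∂(κ ∘ₘ ν) = ∫ x, ∫ y, f y ∂κ x ∂ν := by
  rw [Measure.comp_eq_comp_const_apply] at hf ⊢
  rw [Kernel.integral_comp hf, Kernel.const_apply]

lemma tvDist_comp_le (κ : Kernel α β) [IsMarkovKernel κ] {ν ν' : Measure α}
    [IsProbabilityMeasure ν] [IsProbabilityMeasure ν'] {B : ℝ}
    (h : ∀ᵐ z ∂ν, ∀ᵐ z' ∂ν', TVDist (κ z) (κ z') ≤ B) :
    TVDist (κ ∘ₘ ν) (κ ∘ₘ ν') ≤ B := by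
  refine tvDist_le fun f hf hfb => ?_
  have hfi : ∀ m : Measure β, [IsProbabilityMeasure m] → Integrable f m := fun m _ =>
    .of_bound hf.aestronglyMeasurable (1 / 2) (.of_forall hfb)
  have hF : ∀ m : Measure α, [IsProbabilityMeasure m] → Integrable (fun z => ∫ y, f y ∂κ z) m :=
    fun m _ => .of_bound (hf.stronglyMeasurable.integral_kernel (κ := κ)).aestronglyMeasurable
      (1 / 2) (.of_forall fun z => abs_integral_le_half_of_abs_le_half (κ z) hfb)
  rw [integral_comp_measure κ ν (hfi _), integral_comp_measure κ ν' (hfi _)]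
  refine integral_sub_integral_le_of_ae_ae (hF ν) (hF ν') ?_
  filter_upwards [h] with z hz
  filter_upwards [hz] with z' hz'
  exact (sub_le_tvDist (κ z) (κ z') hf hfb).trans hz'

end TotalVariation

section Wasserstein

variable {α : Type*} [MeasurableSpace α] [PseudoMetricSpace α]

lemma wass_le_integral_dist {P Q : Measure α} (π : Measure (α × α))
    (h₁ : π.map Prod.fst = P) (h₂ : π.map Prod.snd = Q) :
    Wass P Q ≤ ∫ p, dist p.1 p.2 ∂π := by
  refine csInf_le ⟨0, ?_⟩ ⟨π, h₁, h₂, rfl⟩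
  rintro _ ⟨π', -, -, rfl⟩
  exact integral_nonneg fun p => dist_nonneg

variable [OpensMeasurableSpace α] [SecondCountableTopology α]

/-- If `P = c + r₁` and `Q = c + r₂`, keep the common part `c` on the diagonal and couple the
remainders independently: only the mass of `r₁` is moved, by at most the diameter `1`. -/
lemma wass_le_of_add_eq (hd : ∀ a b : α, dist a b ≤ 1) {P Q c r₁ r₂ : Measure α}
    [IsProbabilityMeasure P] [IsProbabilityMeasure Q] (hP : c + r₁ = P) (hQ : c + r₂ = Q) :
    Wass P Q ≤ (r₁ Set.univ).toReal := by
  have : IsFiniteMeasure c := isFiniteMeasure_of_le P (hP ▸ Measure.le_add_right le_rfl)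
  have : IsFiniteMeasure r₁ := isFiniteMeasure_of_le P (hP ▸ Measure.le_add_left le_rfl)
  have : IsFiniteMeasure r₂ := isFiniteMeasure_of_le Q (hQ ▸ Measure.le_add_left le_rfl)
  set T := r₁ Set.univ
  have hT₂ : r₂ Set.univ = T := by
    refine (ENNReal.add_right_inj (measure_ne_top c Set.univ)).mp ?_
    rw [← Measure.add_apply, ← Measure.add_apply, hP, hQ, measure_univ, measure_univ]
  have normalize : ∀ r : Measure α, r Set.univ = T → (T⁻¹ * T) • r = r := fun r hr => by
    rcases eq_or_ne T 0 with h0 | h0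
    · rw [Measure.measure_univ_eq_zero.mp (hr.trans h0), smul_zero]
    · rw [ENNReal.inv_mul_cancel h0 (measure_ne_top r₁ _), one_smul]
  set s := T⁻¹ • r₁.prod r₂
  have hs₁ : s.map Prod.fst = r₁ := by
    rw [Measure.map_smul, Measure.map_fst_prod, hT₂, smul_smul, normalize r₁ rfl]
  have hs₂ : s.map Prod.snd = r₂ := by
    rw [Measure.map_smul, Measure.map_snd_prod, smul_smul, normalize r₂ hT₂]
  have : IsFiniteMeasure s := by
    constructor
    rw [← Set.preimage_univ (f := Prod.fst), ← Measure.map_apply measurable_fst .univ, hs₁]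
    exact measure_lt_top _ _
  have hdiag : Measurable fun x : α => (x, x) := measurable_id.prodMk measurable_id
  have hdist : ∀ m : Measure (α × α), [IsFiniteMeasure m] →
      Integrable (fun p : α × α => dist p.1 p.2) m := fun m _ =>
    .of_bound continuous_dist.aestronglyMeasurable 1
      (.of_forall fun p => (Real.norm_of_nonneg dist_nonneg).trans_le (hd p.1 p.2))
  calc Wass P Q ≤ ∫ p, dist p.1 p.2 ∂(c.map (fun x => (x, x)) + s) := by
        refine wass_le_integral_dist _ ?_ ?_
        · rw [Measure.map_add _ _ measurable_fst, Measure.map_map measurable_fst hdiag, hs₁]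
          exact hP ▸ congrArg (· + r₁) Measure.map_id
        · rw [Measure.map_add _ _ measurable_snd, Measure.map_map measurable_snd hdiag, hs₂]
          exact hQ ▸ congrArg (· + r₂) Measure.map_id
    _ = ∫ p, dist p.1 p.2 ∂s := by
        rw [integral_add_measure (hdist _) (hdist _),
          integral_map hdiag.aemeasurable continuous_dist.aestronglyMeasurable]
        simp
    _ ≤ s.real Set.univ := by
        simpa using (le_abs_self _).trans (norm_integral_le_of_norm_le_const (μ := s)
          (.of_forall fun p => (Real.norm_of_nonneg dist_nonneg).trans_le (hd p.1 p.2)))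
    _ = T.toReal := by
        rw [measureReal_def, ← Set.preimage_univ (f := Prod.fst),
          ← Measure.map_apply measurable_fst .univ, hs₁]

lemma wass_le_tvDist (hd : ∀ a b : α, dist a b ≤ 1) (P Q : Measure α) [IsProbabilityMeasure P]
    [IsProbabilityMeasure Q] : Wass P Q ≤ TVDist P Q := by
  obtain ⟨s, hs, hQP, hPQ⟩ := hahn_decomposition P Q
  have hle₁ : Q.restrict s ≤ P.restrict s := Measure.le_iff.mpr fun t ht => by
    rw [Measure.restrict_apply ht, Measure.restrict_apply ht]
    exact hQP _ (ht.inter hs) Set.inter_subset_right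
  have hle₂ : P.restrict sᶜ ≤ Q.restrict sᶜ := Measure.le_iff.mpr fun t ht => by
    rw [Measure.restrict_apply ht, Measure.restrict_apply ht]
    exact hPQ _ (ht.inter hs.compl) Set.inter_subset_right
  have hP : Q.restrict s + P.restrict sᶜ + (P.restrict s - Q.restrict s) = P := by
    rw [add_comm (Q.restrict s), add_assoc, add_comm (Q.restrict s),
      Measure.sub_add_cancel_of_le hle₁, add_comm, Measure.restrict_add_restrict_compl hs]
  have hQ : Q.restrict s + P.restrict sᶜ + (Q.restrict sᶜ - P.restrict sᶜ) = Q := by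
    rw [add_assoc, add_comm (P.restrict sᶜ), Measure.sub_add_cancel_of_le hle₂,
      Measure.restrict_add_restrict_compl hs]
  calc Wass P Q ≤ ((P.restrict s - Q.restrict s) Set.univ).toReal := wass_le_of_add_eq hd hP hQ
    _ = P.real s - Q.real s := by
        rw [Measure.sub_apply .univ hle₁, Measure.restrict_apply_univ,
          Measure.restrict_apply_univ, ENNReal.toReal_sub_of_le (hQP s hs subset_rfl)
            (measure_ne_top P s), measureReal_def, measureReal_def]
    _ ≤ TVDist P Q := measureReal_sub_le_tvDist P Q hs

end Wasserstein

section DyadicCells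

lemma cIdx_le_mul_two_pow (η : ℕ) (t : I01) : (cIdx η t : ℝ) ≤ t * 2 ^ η :=
  (Nat.cast_le.mpr (min_le_left _ _)).trans (Nat.floor_le (mul_nonneg t.2.1 (by positivity)))

lemma mul_two_pow_le_cIdx_add_one (η : ℕ) (t : I01) : (t : ℝ) * 2 ^ η ≤ cIdx η t + 1 := by
  rcases le_total ⌊(t : ℝ) * 2 ^ η⌋₊ (2 ^ η - 1) with h | h
  · rw [cIdx, min_eq_left h]
    exact (Nat.lt_floor_add_one _).le
  · have hcast : ((2 ^ η - 1 : ℕ) : ℝ) + 1 = 2 ^ η := by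
      rw [Nat.cast_sub Nat.one_le_two_pow]
      push_cast
      ring
    rw [cIdx, min_eq_right h, hcast]
    exact mul_le_of_le_one_left (by positivity) t.2.2

lemma coe_cMid (η : ℕ) (t : I01) : (cMid η t : ℝ) = ((cIdx η t : ℝ) + 1 / 2) / 2 ^ η := rfl

lemma cMid_congr (η : ℕ) {t s : I01} (h : cIdx η t = cIdx η s) : cMid η t = cMid η s :=
  Subtype.ext (by rw [coe_cMid, coe_cMid, h])

lemma cIdx_cMid (η : ℕ) (t : I01) : cIdx η (cMid η t) = cIdx η t := by
  have hfloor : ⌊(cMid η t : ℝ) * 2 ^ η⌋₊ = cIdx η t := by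
    rw [show (cMid η t : ℝ) * 2 ^ η = cIdx η t + 1 / 2 by rw [coe_cMid]; field_simp,
      Nat.floor_eq_iff (by positivity)]
    constructor <;> linarith
  rw [cIdx, hfloor]
  exact min_eq_left (min_le_right _ _)

lemma cMid_eq_self_of_mem_range {η : ℕ} {t : I01} (ht : t ∈ Set.range (cMid η)) :
    cMid η t = t := by
  obtain ⟨s, rfl⟩ := ht
  exact cMid_congr η (cIdx_cMid η s)

lemma dist_cMid_le_of_cIdx_eq (η : ℕ) {t s : I01} (h : cIdx η t = cIdx η s) :
    dist t (cMid η s) ≤ (2 ^ η : ℝ)⁻¹ / 2 := by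
  have h2 : (0 : ℝ) < 2 ^ η := by positivity
  have hlo := cIdx_le_mul_two_pow η t
  have hhi := mul_two_pow_le_cIdx_add_one η t
  have e : (t : ℝ) - (cMid η s : ℝ) = ((t : ℝ) * 2 ^ η - (cIdx η t + 1 / 2)) / 2 ^ η := by
    rw [coe_cMid, ← h]
    field_simp
  rw [Subtype.dist_eq, Real.dist_eq, e, abs_div, abs_of_pos h2, div_le_iff₀ h2,
    show (2 ^ η : ℝ)⁻¹ / 2 * 2 ^ η = 1 / 2 by field_simp, abs_le]
  constructor <;> linarith

lemma inv_two_pow_le_dist_cMid (η : ℕ) {t s : I01} (h : cIdx η t ≠ cIdx η s) :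
    (2 ^ η : ℝ)⁻¹ ≤ dist (cMid η t) (cMid η s) := by
  have h2 : (0 : ℝ) < 2 ^ η := by positivity
  have e : (cMid η t : ℝ) - cMid η s = ((cIdx η t : ℝ) - cIdx η s) / 2 ^ η := by
    rw [coe_cMid, coe_cMid]
    ring
  have hone : (1 : ℝ) ≤ |(cIdx η t : ℝ) - cIdx η s| := by
    have := Int.one_le_abs (sub_ne_zero.mpr (Int.natCast_inj.not.mpr h))
    exact_mod_cast this
  rw [Subtype.dist_eq, Real.dist_eq, e, abs_div, abs_of_pos h2, inv_eq_one_div]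
  exact div_le_div_of_nonneg_right hone h2.le

lemma measurable_cIdx (η : ℕ) : Measurable (cIdx η) :=
  (measurable_from_top (f := fun n : ℕ => min n (2 ^ η - 1))).comp
    (Nat.measurable_floor.comp (measurable_subtype_coe.mul_const _))

lemma measurable_cMid (η : ℕ) : Measurable (cMid η) :=
  ((measurable_from_top.comp (measurable_cIdx η)).add_const _).div_const _ |>.subtype_mk

lemma dist_I01_le_one (a b : I01) : dist a b ≤ 1 := by
  rw [Subtype.dist_eq, Real.dist_eq, abs_le]
  constructor <;> linarith [a.2.1, a.2.2, b.2.1, b.2.2]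

variable {K : ℕ} (d : Fin K → ℕ) (η : ℕ) {I : Finset (Fin K)}

lemma dist_ptOn_le_one (a b : PtOn d I) : dist a b ≤ 1 :=
  (dist_pi_le_iff zero_le_one).mpr fun _ =>
    (dist_pi_le_iff zero_le_one).mpr fun _ => dist_I01_le_one _ _

lemma measurableSet_cellOn (x : PtOn d I) : MeasurableSet (cellOn d η I x) := by
  simp only [cellOn, Set.ofPred_forall]
  exact .iInter fun j => .iInter fun i =>
    ((measurable_cIdx η).comp ((measurable_pi_apply i).comp (measurable_pi_apply j)))
      (measurableSet_singleton _)

lemma measurable_midPtOn : Measurable (midPtOn d η I) :=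
  measurable_pi_lambda _ fun j => measurable_pi_lambda _ fun i =>
    (measurable_cMid η).comp ((measurable_pi_apply i).comp (measurable_pi_apply j))

lemma midPtOn_mem_cellOn (x : PtOn d I) : midPtOn d η I x ∈ cellOn d η I x :=
  fun j i => cIdx_cMid η (x j i)

lemma midPtOn_eq_self {y : PtOn d I} (hy : ∀ j i, y j i ∈ Set.range (cMid η)) :
    midPtOn d η I y = y :=
  funext fun j => funext fun i => cMid_eq_self_of_mem_range (hy j i)

variable {d η}

lemma dist_midPtOn_le {y z : PtOn d I} (hz : z ∈ cellOn d η I y) :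
    dist z (midPtOn d η I y) ≤ (2 ^ η : ℝ)⁻¹ / 2 :=
  have hδ : (0 : ℝ) ≤ (2 ^ η : ℝ)⁻¹ / 2 := by positivity
  (dist_pi_le_iff hδ).mpr fun j =>
    (dist_pi_le_iff hδ).mpr fun i => dist_cMid_le_of_cIdx_eq η (hz j i)

lemma inv_two_pow_le_dist_of_ne {y y' : PtOn d I} (hy : midPtOn d η I y = y)
    (hy' : midPtOn d η I y' = y') (hne : y ≠ y') : (2 ^ η : ℝ)⁻¹ ≤ dist y y' := by
  obtain ⟨j, hj⟩ := Function.ne_iff.mp hne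
  obtain ⟨i, hi⟩ := Function.ne_iff.mp hj
  have hmid : ∀ {x : PtOn d I}, midPtOn d η I x = x → cMid η (x j i) = x j i :=
    fun hx => congrFun (congrFun hx j) i
  have hcell : cIdx η (y j i) ≠ cIdx η (y' j i) := fun h =>
    hi (by rw [← hmid hy, ← hmid hy', cMid_congr η h])
  calc (2 ^ η : ℝ)⁻¹ ≤ dist (cMid η (y j i)) (cMid η (y' j i)) := inv_two_pow_le_dist_cMid η hcell
    _ = dist (y j i) (y' j i) := by rw [hmid hy, hmid hy']
    _ ≤ dist y y' := (dist_le_pi_dist _ _ i).trans (dist_le_pi_dist y y' j)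

lemma dist_le_two_mul_dist_of_mem_cellOn {y y' z z' : PtOn d I} (hy : midPtOn d η I y = y)
    (hy' : midPtOn d η I y' = y') (hne : y ≠ y') (hz : z ∈ cellOn d η I y)
    (hz' : z' ∈ cellOn d η I y') : dist z z' ≤ 2 * dist y y' := by
  have h₁ := dist_midPtOn_le hz
  have h₂ := dist_midPtOn_le hz'
  rw [hy] at h₁
  rw [hy', dist_comm] at h₂
  linarith [dist_triangle4 z y y' z', inv_two_pow_le_dist_of_ne hy hy' hne]

end DyadicCells

section CellConditioning

variable {α : Type*} [MeasurableSpace α]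

instance isProbabilityMeasure_condOn (m : Measure α) [IsFiniteMeasure m] (s : Set α) (x₀ : α) :
    IsProbabilityMeasure (condOn m s x₀) := by
  unfold condOn
  split_ifs with h
  · infer_instance
  · constructor
    rw [Measure.smul_apply, Measure.restrict_apply_univ, smul_eq_mul,
      ENNReal.inv_mul_cancel h (measure_ne_top m s)]

lemma ae_mem_condOn (m : Measure α) {s : Set α} (hs : MeasurableSet s) {x₀ : α} (hx : x₀ ∈ s) :
    ∀ᵐ z ∂condOn m s x₀, z ∈ s := by
  unfold condOn
  split_ifs
  · exact (ae_dirac_iff hs).mpr hx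
  · exact Measure.ae_smul_measure (ae_restrict_mem hs) _

variable {K : ℕ} {d : Fin K → ℕ} {pa : Fin K → Finset (Fin K)} {η : ℕ} {μ : Measure (Pt d)}
  [IsFiniteMeasure μ] {k : Fin K} (κ : Kernel (PtOn d (pa k)) (PtOn d ({k} : Finset (Fin K))))
  [IsMarkovKernel κ]

instance isProbabilityMeasure_kerM (y : PtOn d (pa k)) :
    IsProbabilityMeasure (kerM d pa η μ k κ y) :=
  Measure.isProbabilityMeasure_map (measurable_midPtOn d η).aemeasurable

lemma tvDist_kerM_le {L : ℝ} (hκ : ∀ x x', TVDist (κ x) (κ x') ≤ L * dist x x')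
    {y y' : PtOn d (pa k)} (hy : midPtOn d η (pa k) y = y) (hy' : midPtOn d η (pa k) y' = y') :
    TVDist (kerM d pa η μ k κ y) (kerM d pa η μ k κ y') ≤ 2 * L * dist y y' := by
  refine (tvDist_map_le _ _ (measurable_midPtOn d η)).trans ?_
  rcases eq_or_ne y y' with rfl | hne
  · rw [tvDist_self, dist_self, mul_zero]
  have hL : 0 ≤ L := nonneg_of_mul_nonneg_left ((tvDist_nonneg _ _).trans (hκ y y'))
    (dist_pos.mpr hne)
  refine tvDist_comp_le κ ?_
  filter_upwards [ae_mem_condOn _ (measurableSet_cellOn d η y) (midPtOn_mem_cellOn d η y)]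
    with z hz
  filter_upwards [ae_mem_condOn _ (measurableSet_cellOn d η y') (midPtOn_mem_cellOn d η y')]
    with z' hz'
  calc TVDist (κ z) (κ z') ≤ L * dist z z' := hκ z z'
    _ ≤ L * (2 * dist y y') :=
      mul_le_mul_of_nonneg_left (dist_le_two_mul_dist_of_mem_cellOn hy hy' hne hz hz') hL
    _ = 2 * L * dist y y' := by ring

end CellConditioning

theorem stmt14_general {K : ℕ} (d : Fin K → ℕ) (pa : Fin K → Finset (Fin K)) (L : ℝ) (η : ℕ)
    (μ : Measure (Pt d)) (hμ : IsProbabilityMeasure μ) :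
    ∀ k : Fin K, 1 ≤ k.1 →
      ∀ κ : PtOn d (pa k) → Measure (PtOn d ({k} : Finset (Fin K))),
        IsCondD d μ (pa k) {k} κ →
        (∀ x x', TVDist (κ x) (κ x') ≤ L * dist x x') →
        ∀ y y' : PtOn d (pa k),
          (∀ j i, y j i ∈ Set.range (cMid η)) → (∀ j i, y' j i ∈ Set.range (cMid η)) →
          Wass (kerM d pa η μ k κ y) (kerM d pa η μ k κ y')
            ≤ (2 * L + 1) * dist y y' := by
  intro k _ κ ⟨hκm, hκp, _⟩ hκ y y' hy hy'
  let κK : Kernel (PtOn d (pa k)) (PtOn d ({k} : Finset (Fin K))) := ⟨κ, hκm⟩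
  have : IsMarkovKernel κK := ⟨hκp⟩
  calc Wass (kerM d pa η μ k κK y) (kerM d pa η μ k κK y')
      ≤ TVDist (kerM d pa η μ k κK y) (kerM d pa η μ k κK y') :=
        wass_le_tvDist (dist_ptOn_le_one d) _ _
    _ ≤ 2 * L * dist y y' :=
        tvDist_kerM_le κK hκ (midPtOn_eq_self d η hy) (midPtOn_eq_self d η hy')
    _ ≤ (2 * L + 1) * dist y y' := by linarith [dist_nonneg (x := y) (y := y')]

/-- Lemma: the kernels of `μ^M` are `(2L+1)`-Lipschitz in Wasserstein.
If `G` has no colliders and `μ ∈ P_G` satisfies the TV-Lipschitz kernel assumption with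
constant `L`, then for every `2 ≤ k ≤ K` and all midpoints `x_pa(k), x̃_pa(k) ∈ M_pa(k)`,
`W(μ^M(dx_k|x_pa(k)), μ^M(dx_k|x̃_pa(k))) ≤ (2L+1)‖x_pa(k) − x̃_pa(k)‖`. -/
theorem stmt14 {K : ℕ} (d : Fin K → ℕ) (pa : Fin K → Finset (Fin K))
    (hsort : SortedGraph pa) (hnc : NoColliders pa) (L : ℝ) (η : ℕ)
    (μ : Measure (Pt d)) (hμ : IsProbabilityMeasure μ)
    (hPG : MemPG d pa μ) (hTV : TVLip d pa L μ) :
    ∀ k : Fin K, 1 ≤ k.1 →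
      ∀ κ : PtOn d (pa k) → Measure (PtOn d ({k} : Finset (Fin K))),
        IsCondD d μ (pa k) {k} κ →
        (∀ x x', TVDist (κ x) (κ x') ≤ L * dist x x') →
        ∀ y y' : PtOn d (pa k),
          (∀ j i, y j i ∈ Set.range (cMid η)) → (∀ j i, y' j i ∈ Set.range (cMid η)) →
          Wass (kerM d pa η μ k κ y) (kerM d pa η μ k κ y')
            ≤ (2 * L + 1) * dist y y' :=
  stmt14_general d pa L η μ hμ
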